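/- arXiv:1912.07132 — 8 statements merged into one kernel-verified Lean document; each statement's English description precedes it below -/
import Mathlib

section
/- The ring ℤ/3ℤ × ℤ/3ℤ is not weakly nil-clean. -/
def IsWeaklyNilClean (R : Type*) [CommRing R] : Prop :=
  ∀ a : R, ∃ n e : R, IsNilpotent n ∧ IsIdempotentElem e ∧ (a = n + e ∨ a = n - e)

theorem zmod3_sq_not_weakly_nil_clean : ¬ IsWeaklyNilClean (ZMod 3 × ZMod 3) := by
  intro h
  obtain ⟨n, e, hn, he, hc⟩ := h (1, 2)
  have hn0 : n = 0 := hn.eq_zero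
  subst hn0
  rcases hc with hc | hc
  · rw [zero_add] at hc
    subst hc
    unfold IsIdempotentElem at he
    revert he
    decide
  · rw [zero_sub] at hc
    have : e = -(1, 2) := by rw [hc]; ring
    subst this
    unfold IsIdempotentElem at he
    revert he
    decide
end

section
/- If R is a commutative weakly nil-clean ring, then the Jacobson radical of R is nil and equals the nilradical of R. -/
lemma idem_in_jacobson_eq_zero {R : Type*} [CommRing R] {e : R}
    (he : IsIdempotentElem e) (hj : e ∈ Ideal.jacobson (⊥ : Ideal R)) : e = 0 := by
  rw [Ideal.mem_jacobson_bot] at hj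
  have hu : IsUnit (e * (-1) + 1) := hj (-1)
  have h0 : e * (e * (-1) + 1) = 0 * (e * (-1) + 1) := by
    rw [zero_mul]; linear_combination (-1 : R) * he.eq
  exact hu.mul_right_cancel h0

theorem weakly_nil_clean_jacobson_nil (R : Type*) [CommRing R] (h : IsWeaklyNilClean R) :
    (∀ x ∈ Ideal.jacobson (⊥ : Ideal R), IsNilpotent x) ∧
      Ideal.jacobson (⊥ : Ideal R) = nilradical R := by
  have key : ∀ x ∈ Ideal.jacobson (⊥ : Ideal R), IsNilpotent x := by
    intro x hx
    obtain ⟨n, e, hn, he, hcase | hcase⟩ := h x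
    · have hnJ : n ∈ Ideal.jacobson (⊥ : Ideal R) :=
        Ideal.radical_le_jacobson (mem_nilradical.mpr hn)
      have heJ : e ∈ Ideal.jacobson (⊥ : Ideal R) := by
        have : e = x - n := by rw [hcase]; ring
        rw [this]; exact sub_mem hx hnJ
      have : e = 0 := idem_in_jacobson_eq_zero he heJ
      rw [hcase, this, add_zero]; exact hn
    · have hnJ : n ∈ Ideal.jacobson (⊥ : Ideal R) :=
        Ideal.radical_le_jacobson (mem_nilradical.mpr hn)
      have heJ : e ∈ Ideal.jacobson (⊥ : Ideal R) := by
        have : e = n - x := by rw [hcase]; ring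
        rw [this]; exact sub_mem hnJ hx
      have : e = 0 := idem_in_jacobson_eq_zero he heJ
      rw [hcase, this, sub_zero]; exact hn
  refine ⟨key, le_antisymm (fun x hx => key x hx) Ideal.radical_le_jacobson⟩
end

section
/- If R is a commutative weakly nil-clean ring, then for every maximal ideal M of R, the quotient R/M is isomorphic to either ℤ/2ℤ or ℤ/3ℤ. -/
/-
In a residue field the only nilpotent is 0 and the only idempotents are 0 and 1, so every
element of R ⧸ M is 0, 1 or -1. Applied to 2, this forces 2 = 0 or 3 = 0, and a ring of
characteristic n all of whose elements are integer casts is ZMod n.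
-/

namespace IsWeaklyNilClean

variable {R S : Type*} [CommRing R] [CommRing S]

theorem of_surjective (hR : IsWeaklyNilClean R) (f : R →+* S) (hf : Function.Surjective f) :
    IsWeaklyNilClean S := by
  intro b
  obtain ⟨a, rfl⟩ := hf b
  obtain ⟨n, e, hn, he, hae⟩ := hR a
  refine ⟨f n, f e, hn.map f, he.map f, ?_⟩
  rcases hae with rfl | rfl
  · exact Or.inl (map_add f n e)
  · exact Or.inr (map_sub f n e)

theorem eq_zero_or_eq_one_or_eq_neg_one [NoZeroDivisors R] (hR : IsWeaklyNilClean R) (a : R) :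
    a = 0 ∨ a = 1 ∨ a = -1 := by
  obtain ⟨n, e, hn, he, hae⟩ := hR a
  rw [hn.eq_zero] at hae
  rcases IsIdempotentElem.iff_eq_zero_or_one.mp he with rfl | rfl <;>
    rcases hae with rfl | rfl <;> simp

end IsWeaklyNilClean

theorem ZMod.nonempty_ringEquiv_of_forall_eq_intCast (K : Type*) [Ring K] (n : ℕ) [CharP K n]
    (hK : ∀ x : K, ∃ k : ℤ, x = k) : Nonempty (K ≃+* ZMod n) := by
  have hsurj : Function.Surjective (ZMod.castHom (dvd_refl n) K) := fun x ↦ by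
    obtain ⟨k, rfl⟩ := hK x
    exact ⟨k, map_intCast _ k⟩
  exact ⟨(RingEquiv.ofBijective _ ⟨ZMod.castHom_injective K, hsurj⟩).symm⟩

theorem nonempty_ringEquiv_zmod_two_or_three_of_forall_eq_zero_or_eq_one_or_eq_neg_one
    (K : Type*) [CommRing K] [Nontrivial K] (hK : ∀ x : K, x = 0 ∨ x = 1 ∨ x = -1) :
    Nonempty (K ≃+* ZMod 2) ∨ Nonempty (K ≃+* ZMod 3) := by
  have hint (x : K) : ∃ k : ℤ, x = k := by
    rcases hK x with rfl | rfl | rfl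
    exacts [⟨0, by simp⟩, ⟨1, by simp⟩, ⟨-1, by simp⟩]
  have hchar : (2 : K) = 0 ∨ (3 : K) = 0 := by
    rcases hK 2 with h2 | h2 | h2
    · exact Or.inl h2
    · exact absurd (by linear_combination h2 : (1 : K) = 0) one_ne_zero
    · exact Or.inr (by linear_combination h2)
  rcases hchar with h2 | h3
  · have : CharP K 2 := (CharP.charP_iff_prime_eq_zero Nat.prime_two).mpr (mod_cast h2)
    exact Or.inl (ZMod.nonempty_ringEquiv_of_forall_eq_intCast K 2 hint)
  · have : CharP K 3 := (CharP.charP_iff_prime_eq_zero Nat.prime_three).mpr (mod_cast h3)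
    exact Or.inr (ZMod.nonempty_ringEquiv_of_forall_eq_intCast K 3 hint)

theorem weakly_nil_clean_residue_fields (R : Type*) [CommRing R] (h : IsWeaklyNilClean R) :
    ∀ M : Ideal R, M.IsMaximal →
      Nonempty ((R ⧸ M) ≃+* ZMod 2) ∨ Nonempty ((R ⧸ M) ≃+* ZMod 3) := by
  intro M _
  have hquot := h.of_surjective (Ideal.Quotient.mk M) Ideal.Quotient.mk_surjective
  exact nonempty_ringEquiv_zmod_two_or_three_of_forall_eq_zero_or_eq_one_or_eq_neg_one (R ⧸ M)
    hquot.eq_zero_or_eq_one_or_eq_neg_one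
end

section
/- If R is a commutative weakly nil-clean ring, then there is at most one maximal ideal M of R with R/M ≅ ℤ/3ℤ. -/
theorem weakly_nil_clean_at_most_one_z3_residue (R : Type*) [CommRing R]
    (h : IsWeaklyNilClean R) :
    ∀ M N : Ideal R, M.IsMaximal → N.IsMaximal →
      Nonempty ((R ⧸ M) ≃+* ZMod 3) → Nonempty ((R ⧸ N) ≃+* ZMod 3) → M = N := by
  rintro M N hM hN ⟨fM⟩ ⟨fN⟩
  by_contra hne
  have hsup : M ⊔ N = ⊤ := Ideal.IsMaximal.coprime_of_ne hM hN hne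
  obtain ⟨m, hm, n, hn, hmn⟩ :=
    Submodule.mem_sup.mp (hsup ▸ Submodule.mem_top : (1 : R) ∈ M ⊔ N)
  obtain ⟨x, hx⟩ := Ideal.Quotient.mk_surjective (I := M) (fM.symm 2)
  obtain ⟨y, hy⟩ := Ideal.Quotient.mk_surjective (I := N) (fN.symm 1)
  set a := n * x + m * y with ha
  set gM : R →+* ZMod 3 := fM.toRingHom.comp (Ideal.Quotient.mk M) with hgM
  set gN : R →+* ZMod 3 := fN.toRingHom.comp (Ideal.Quotient.mk N) with hgN
  have haM : gM a = 2 := by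
    have hmem : a - x ∈ M := by
      have : a - x = m * (y - x) := by linear_combination x * hmn
      rw [this]; exact Ideal.mul_mem_right _ _ hm
    have : Ideal.Quotient.mk M a = Ideal.Quotient.mk M x :=
      Ideal.Quotient.eq.mpr hmem
    simp [hgM, this, hx]
  have haN : gN a = 1 := by
    have hmem : a - y ∈ N := by
      have : a - y = n * (x - y) := by linear_combination y * hmn
      rw [this]; exact Ideal.mul_mem_right _ _ hn
    have : Ideal.Quotient.mk N a = Ideal.Quotient.mk N y :=
      Ideal.Quotient.eq.mpr hmem
    simp [hgN, this, hy]
  obtain ⟨ν, e, hν, he, hcase⟩ := h a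
  have hkey : ∀ z : ZMod 3, z * z = z → z = 0 ∨ z = 1 := by decide
  rcases hcase with hc | hc
  · have h0 : gM ν = 0 := (hν.map gM).eq_zero
    have h1 : gM e * gM e = gM e := by rw [← map_mul, he]
    have := hkey _ h1
    rw [hc, map_add, h0, zero_add] at haM
    rcases this with h2 | h2 <;> rw [h2] at haM <;> exact absurd haM (by decide)
  · have h0 : gN ν = 0 := (hν.map gN).eq_zero
    have h1 : gN e * gN e = gN e := by rw [← map_mul, he]
    have := hkey _ h1
    rw [hc, map_sub, h0, zero_sub] at haN
    rcases this with h2 | h2 <;> rw [h2] at haN <;> exact absurd haN (by decide)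
end

section
/- A commutative ring R is weakly nil-clean if and only if J(R) is nil and R/J(R) is isomorphic to a Boolean ring, or to ℤ/3ℤ, or to the direct product of a Boolean ring and ℤ/3ℤ. -/
universe u

/-!
Call a ring weakly Boolean if each of its elements is an idempotent or the negative of one. As
nilpotents lie in `J(R)` and `0` is the only idempotent of `J(R)`, a weakly nil-clean ring has `J(R)`
nil and `R/J(R)` weakly Boolean; conversely, idempotents lift along the nil ideal `J(R)`. It remains
to classify weakly Boolean rings `S`. Since `2` is `±` an idempotent, `6 = 0` and
`S ≃ S/2S × S/3S`. The factor `S/2S` is Boolean, and in `S/3S` every idempotent `e` has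
`(e + 1)² = 1`, which forces `e ∈ {0, 1}`, so `S/3S` is `0` or `𝔽₃`.
-/

def IsWeaklyBoolean (S : Type*) [CommRing S] : Prop :=
  ∀ x : S, IsIdempotentElem x ∨ IsIdempotentElem (-x)

theorem neg_eq_self_of_forall_mul_self {B : Type*} [CommRing B] (hB : ∀ b : B, b * b = b)
    (b : B) : -b = b := by
  linear_combination 4 * hB b - hB (b + b)

namespace IsWeaklyBoolean

variable {S T : Type*} [CommRing S] [CommRing T]

theorem of_surjective {F : Type*} [FunLike F S T] [RingHomClass F S T] (h : IsWeaklyBoolean S)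
    (f : F) (hf : Function.Surjective f) : IsWeaklyBoolean T := by
  intro y
  obtain ⟨x, rfl⟩ := hf y
  rw [← map_neg]
  exact (h x).imp (·.map f) (·.map f)

theorem of_forall_isIdempotentElem (h : ∀ x : S, IsIdempotentElem x) : IsWeaklyBoolean S :=
  fun x => Or.inl (h x)

theorem zmod_three : IsWeaklyBoolean (ZMod 3) := by
  unfold IsWeaklyBoolean IsIdempotentElem
  decide

theorem prod_of_forall_mul_self (hS : ∀ x : S, x * x = x) (hT : IsWeaklyBoolean T) :
    IsWeaklyBoolean (S × T) := by
  rintro ⟨x, y⟩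
  have hx : IsIdempotentElem x := hS x
  have hx' : IsIdempotentElem (-x) := by rw [neg_eq_self_of_forall_mul_self hS]; exact hx
  exact (hT y).imp (fun hy => Prod.ext hx hy) (fun hy => Prod.ext hx' hy)

theorem six_eq_zero (h : IsWeaklyBoolean S) : (6 : S) = 0 := by
  rcases h 2 with h2 | h2
  · linear_combination 3 * h2.eq
  · linear_combination h2.eq

theorem mul_self_of_two_eq_zero (h : IsWeaklyBoolean S) (h2 : (2 : S) = 0) (x : S) :
    x * x = x := by
  rcases h x with hx | hx
  · exact hx.eq
  · linear_combination hx.eq - x * h2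

theorem isIdempotentElem_eq_zero_or_one (h : IsWeaklyBoolean S) (h3 : (3 : S) = 0) {e : S}
    (he : IsIdempotentElem e) : e = 0 ∨ e = 1 := by
  have hsq : (e + 1) * (e + 1) = 1 := by linear_combination he.eq + e * h3
  rcases h (e + 1) with h1 | h1
  · left; linear_combination hsq - h1.eq
  · right; linear_combination h1.eq - hsq - h3

theorem eq_zero_or_one_or_neg_one (h : IsWeaklyBoolean S) (h3 : (3 : S) = 0) (x : S) :
    x = 0 ∨ x = 1 ∨ x = -1 := by
  rcases h x with hx | hx
  · exact (h.isIdempotentElem_eq_zero_or_one h3 hx).imp_right Or.inl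
  · rcases h.isIdempotentElem_eq_zero_or_one h3 hx with hx | hx
    · exact Or.inl (neg_eq_zero.mp hx)
    · exact Or.inr (Or.inr (neg_eq_iff_eq_neg.mp hx))

theorem nonempty_ringEquiv_zmod_three [Nontrivial S] (h : IsWeaklyBoolean S)
    (h3 : (3 : S) = 0) : Nonempty (S ≃+* ZMod 3) := by
  have : CharP S 3 := (CharP.charP_iff_prime_eq_zero Nat.prime_three).2 h3
  let f : ZMod 3 →+* S := ZMod.castHom (dvd_refl 3) S
  have hf : Function.Surjective f := fun x => by
    rcases h.eq_zero_or_one_or_neg_one h3 x with rfl | rfl | rfl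
    exacts [⟨0, map_zero f⟩, ⟨1, map_one f⟩, ⟨-1, by rw [map_neg, map_one]⟩]
  exact ⟨(RingEquiv.ofBijective f ⟨f.injective, hf⟩).symm⟩

end IsWeaklyBoolean

noncomputable def RingEquiv.quotientSpanProdOfIsCoprime {R : Type*} [CommRing R] {a b : R}
    (hab : IsCoprime a b) (h : a * b = 0) : R ≃+* (R ⧸ Ideal.span {a}) × (R ⧸ Ideal.span {b}) :=
  have hcop : IsCoprime (Ideal.span {a}) (Ideal.span {b}) :=
    Ideal.isCoprime_span_singleton_iff a b |>.mpr hab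
  have hinf : Ideal.span {a} ⊓ Ideal.span {b} = ⊥ := by
    rw [← Ideal.mul_eq_inf_of_isCoprime hcop, Ideal.span_singleton_mul_span_singleton, h,
      Ideal.span_singleton_eq_bot.mpr rfl]
  (RingEquiv.quotientBot R).symm.trans
    ((Ideal.quotEquivOfEq hinf.symm).trans (Ideal.quotientInfEquivQuotientProd _ _ hcop))

theorem isWeaklyBoolean_iff {S : Type u} [CommRing S] :
    IsWeaklyBoolean S ↔
      ((∃ (B : Type u) (_ : CommRing B), (∀ b : B, b * b = b) ∧ Nonempty (S ≃+* B)) ∨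
        Nonempty (S ≃+* ZMod 3) ∨
        (∃ (B : Type u) (_ : CommRing B), (∀ b : B, b * b = b) ∧ Nonempty (S ≃+* (B × ZMod 3)))) := by
  constructor
  · intro h
    have e := RingEquiv.quotientSpanProdOfIsCoprime (a := (2 : S)) (b := 3) ⟨-1, 1, by ring⟩
      (by linear_combination h.six_eq_zero)
    have hB : ∀ b : S ⧸ Ideal.span {(2 : S)}, b * b = b :=
      (h.of_surjective _ Ideal.Quotient.mk_surjective).mul_self_of_two_eq_zero
        ((map_ofNat _ 2).symm.trans (Ideal.Quotient.mk_singleton_self 2))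
    rcases subsingleton_or_nontrivial (S ⧸ Ideal.span {(3 : S)}) with hT | hT
    · exact Or.inl ⟨_, _, hB, ⟨e.trans (RingEquiv.prodZeroRing _ _).symm⟩⟩
    · obtain ⟨f⟩ := (h.of_surjective _ Ideal.Quotient.mk_surjective).nonempty_ringEquiv_zmod_three
        ((map_ofNat _ 3).symm.trans (Ideal.Quotient.mk_singleton_self 3))
      exact Or.inr (Or.inr ⟨_, _, hB, ⟨e.trans (RingEquiv.prodCongr (RingEquiv.refl _) f)⟩⟩)
  · rintro (⟨B, _, hB, ⟨f⟩⟩ | ⟨⟨f⟩⟩ | ⟨B, _, hB, ⟨f⟩⟩)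
    · exact (IsWeaklyBoolean.of_forall_isIdempotentElem hB).of_surjective f.symm f.symm.surjective
    · exact IsWeaklyBoolean.zmod_three.of_surjective f.symm f.symm.surjective
    · exact (IsWeaklyBoolean.prod_of_forall_mul_self hB IsWeaklyBoolean.zmod_three).of_surjective
        f.symm f.symm.surjective

theorem IsIdempotentElem.eq_zero_of_mem_jacobson_bot {R : Type*} [CommRing R] {e : R}
    (he : IsIdempotentElem e) (heJ : e ∈ Ideal.jacobson (⊥ : Ideal R)) : e = 0 := by
  have hu : IsUnit (1 - e) := Ideal.isUnit_of_sub_one_mem_jacobson_bot _ (by simpa using heJ)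
  exact sub_eq_self.mp ((IsIdempotentElem.iff_eq_one_of_isUnit hu).mp he.one_sub)

namespace IsWeaklyNilClean

variable {R : Type*} [CommRing R]

theorem isWeaklyBoolean_quotient (h : IsWeaklyNilClean R) {I : Ideal R} (hI : nilradical R ≤ I) :
    IsWeaklyBoolean (R ⧸ I) := by
  intro x
  obtain ⟨a, rfl⟩ := Ideal.Quotient.mk_surjective x
  obtain ⟨n, e, hn, he, rfl | rfl⟩ := h a
  all_goals
    have hn0 : Ideal.Quotient.mk I n = 0 :=
      Ideal.Quotient.eq_zero_iff_mem.mpr (hI (mem_nilradical.mpr hn))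
    simp only [map_add, map_sub, hn0, zero_add, zero_sub, neg_neg]
  · exact Or.inl (he.map _)
  · exact Or.inr (he.map _)

theorem isNilpotent_of_mem_jacobson (h : IsWeaklyNilClean R) {x : R}
    (hx : x ∈ Ideal.jacobson (⊥ : Ideal R)) : IsNilpotent x := by
  obtain ⟨n, e, hn, he, hxne⟩ := h x
  have hnJ : n ∈ Ideal.jacobson (⊥ : Ideal R) := Ideal.radical_le_jacobson (mem_nilradical.mpr hn)
  have heJ : e ∈ Ideal.jacobson (⊥ : Ideal R) := by
    rcases hxne with rfl | rfl
    · simpa using sub_mem hx hnJ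
    · simpa using sub_mem hnJ hx
  rcases hxne with rfl | rfl <;> simpa [he.eq_zero_of_mem_jacobson_bot heJ] using hn

theorem of_surjective_of_isWeaklyBoolean {S : Type*} [CommRing S] (f : R →+* S)
    (hf : Function.Surjective f) (hker : ∀ x ∈ RingHom.ker f, IsNilpotent x)
    (hS : IsWeaklyBoolean S) : IsWeaklyNilClean R := by
  intro a
  rcases hS (f a) with ha | ha
  · obtain ⟨e, he, hfe⟩ := exists_isIdempotentElem_eq_of_ker_isNilpotent f hker _ (hf _) ha
    refine ⟨a - e, e, hker _ ?_, he, Or.inl (sub_add_cancel a e).symm⟩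
    rw [RingHom.mem_ker, map_sub, hfe, sub_self]
  · obtain ⟨e, he, hfe⟩ := exists_isIdempotentElem_eq_of_ker_isNilpotent f hker _ (hf _) ha
    refine ⟨a + e, e, hker _ ?_, he, Or.inr (add_sub_cancel_right a e).symm⟩
    rw [RingHom.mem_ker, map_add, hfe, add_neg_cancel]

end IsWeaklyNilClean

theorem weakly_nil_clean_iff (R : Type u) [CommRing R] :
    IsWeaklyNilClean R ↔
      ((∀ x ∈ Ideal.jacobson (⊥ : Ideal R), IsNilpotent x) ∧
        ((∃ (B : Type u) (_ : CommRing B), (∀ b : B, b * b = b) ∧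
            Nonempty ((R ⧸ Ideal.jacobson (⊥ : Ideal R)) ≃+* B)) ∨
          Nonempty ((R ⧸ Ideal.jacobson (⊥ : Ideal R)) ≃+* ZMod 3) ∨
          (∃ (B : Type u) (_ : CommRing B), (∀ b : B, b * b = b) ∧
            Nonempty ((R ⧸ Ideal.jacobson (⊥ : Ideal R)) ≃+* (B × ZMod 3))))) := by
  rw [← isWeaklyBoolean_iff]
  refine ⟨fun h => ⟨fun _ => h.isNilpotent_of_mem_jacobson,
    h.isWeaklyBoolean_quotient Ideal.radical_le_jacobson⟩, fun ⟨hJ, hS⟩ => ?_⟩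
  refine .of_surjective_of_isWeaklyBoolean _ Ideal.Quotient.mk_surjective (fun x hx => ?_) hS
  exact hJ x (by rwa [Ideal.mk_ker] at hx)
end

section
/- Let B be a Boolean ring and G a nontrivial abelian torsion 2-group. Then the group ring B[G] is weakly nil-clean. -/
section ExpChar

variable {R : Type*} [CommRing R] (p : ℕ) [ExpChar R p]

theorem isNilpotent_sub_pow_expChar_pow_of_isIdempotentElem {a : R} {n : ℕ}
    (ha : IsIdempotentElem (a ^ p ^ n)) : IsNilpotent (a - a ^ p ^ n) :=
  ⟨p ^ n, by rw [sub_pow_expChar_pow, ha.pow_eq (expChar_pow_pos R p n).ne', sub_self]⟩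

theorem IsWeaklyNilClean.of_forall_exists_isIdempotentElem_pow_expChar_pow
    (h : ∀ a : R, ∃ n, IsIdempotentElem (a ^ p ^ n)) : IsWeaklyNilClean R := fun a ↦
  let ⟨_, hn⟩ := h a
  ⟨_, _, isNilpotent_sub_pow_expChar_pow_of_isIdempotentElem p hn, hn,
    .inl (sub_add_cancel _ _).symm⟩

end ExpChar

theorem IsWeaklyNilClean.of_subsingleton (R : Type*) [CommRing R] [Subsingleton R] :
    IsWeaklyNilClean R := fun _ ↦
  ⟨0, 0, .zero, .zero, .inl (Subsingleton.elim _ _)⟩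

theorem two_eq_zero_of_forall_mul_self_eq {R : Type*} [CommRing R] (h : ∀ x : R, x * x = x) :
    (2 : R) = 0 := by
  linear_combination h 2

theorem Finset.exists_forall_pow_pow_eq_one {M : Type*} [Monoid M] {p : ℕ} (s : Finset M)
    (h : ∀ g ∈ s, ∃ k, g ^ p ^ k = 1) : ∃ n, ∀ g ∈ s, g ^ p ^ n = 1 := by
  choose! k hk using h
  refine ⟨s.sup k, fun g hg ↦ ?_⟩
  rw [← pow_mul_pow_sub p (s.le_sup hg), pow_mul, hk g hg, one_pow]

namespace MonoidAlgebra

variable {k G : Type*} [CommSemiring k]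

instance charP [Monoid G] (p : ℕ) [CharP k p] : CharP (MonoidAlgebra k G) p :=
  charP_of_injective_algebraMap single_right_injective p

theorem pow_char_pow_of_forall_pow_eq_one [CommMonoid G] {p : ℕ} [Fact p.Prime] [CharP k p]
    (a : MonoidAlgebra k G) {n : ℕ} (h : ∀ g ∈ a.coeff.support, g ^ p ^ n = 1) :
    a ^ p ^ n = algebraMap k _ (∑ g ∈ a.coeff.support, a.coeff g ^ p ^ n) := by
  conv_lhs => rw [← sum_coeff_single a, Finsupp.sum, sum_pow_char_pow]
  rw [map_sum]
  refine Finset.sum_congr rfl fun g hg ↦ ?_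
  rw [single_pow, h g hg]
  rfl

end MonoidAlgebra

theorem boolean_group_ring_weakly_nil_clean_general (B : Type*) [CommRing B]
    (hB : ∀ x : B, x * x = x) (G : Type*) [CommGroup G]
    (hG : ∀ g : G, ∃ n : ℕ, g ^ (2 ^ n) = 1) :
    IsWeaklyNilClean (MonoidAlgebra B G) := by
  rcases subsingleton_or_nontrivial B with _ | _
  · exact .of_subsingleton _
  have : CharP B 2 := CharTwo.of_one_ne_zero_of_two_eq_zero one_ne_zero
    (two_eq_zero_of_forall_mul_self_eq hB)
  refine .of_forall_exists_isIdempotentElem_pow_expChar_pow 2 fun a ↦ ?_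
  obtain ⟨n, hn⟩ := a.coeff.support.exists_forall_pow_pow_eq_one fun g _ ↦ hG g
  refine ⟨n, ?_⟩
  rw [MonoidAlgebra.pow_char_pow_of_forall_pow_eq_one a hn]
  exact IsIdempotentElem.map (hB _) _

theorem boolean_group_ring_weakly_nil_clean (B : Type*) [CommRing B]
    (hB : ∀ x : B, x * x = x) (G : Type*) [CommGroup G] [Nontrivial G]
    (hG : ∀ g : G, ∃ n : ℕ, g ^ (2 ^ n) = 1) :
    IsWeaklyNilClean (MonoidAlgebra B G) :=
  boolean_group_ring_weakly_nil_clean_general B hB G hG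
end

section
/- If R is a commutative reduced weakly nil-neat ring with zero Jacobson radical that is not a field, then every element x of R satisfies x^6 = x^2 (equivalently, R embeds into a product of copies of ℤ/2ℤ and at most two copies of ℤ/3ℤ, so all elements satisfy this polynomial identity). -/
theorem reduced_weakly_nil_neat_identity (R : Type*) [CommRing R] [IsReduced R]
    (hneat : ∀ I : Ideal R, I ≠ ⊥ → IsWeaklyNilClean (R ⧸ I))
    (hJ : Ideal.jacobson (⊥ : Ideal R) = ⊥) (hnf : ¬ IsField R) :
    ∀ x : R, x ^ 6 = x ^ 2 := by
  intro x
  have key : x ^ 6 - x ^ 2 ∈ Ideal.jacobson (⊥ : Ideal R) := by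
    rw [Ideal.jacobson, Ideal.mem_sInf]
    rintro M ⟨-, hM⟩
    have hMne : M ≠ ⊥ := by
      rintro rfl
      apply hnf
      rw [Ring.isField_iff_isSimpleOrder_ideal]
      haveI : Nontrivial (Ideal R) := ⟨⊥, ⊤, hM.ne_top⟩
      refine ⟨fun I => ?_⟩
      rcases eq_or_ne I ⊥ with h | h
      · exact Or.inl h
      · exact Or.inr (hM.1.2 I (bot_lt_iff_ne_bot.mpr h))
    haveI := hM
    letI : Field (R ⧸ M) := Ideal.Quotient.field M
    obtain ⟨n, e, hn, he, hae⟩ := hneat M hMne (Ideal.Quotient.mk M x)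
    have hn0 : n = 0 := hn.eq_zero
    have he01 : e = 0 ∨ e = 1 := IsIdempotentElem.iff_eq_zero_or_one.mp he
    have ha : Ideal.Quotient.mk M x = 0 ∨ Ideal.Quotient.mk M x = 1 ∨
        Ideal.Quotient.mk M x = -1 := by
      rcases hae with h | h <;> rcases he01 with rfl | rfl <;> simp [hn0] at h <;> tauto
    have : (Ideal.Quotient.mk M x) ^ 6 = (Ideal.Quotient.mk M x) ^ 2 := by
      rcases ha with h | h | h <;> rw [h] <;> ring
    have : Ideal.Quotient.mk M (x ^ 6 - x ^ 2) = 0 := by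
      rw [map_sub, map_pow, map_pow, this, sub_self]
    exact Ideal.Quotient.eq_zero_iff_mem.mp this
  rw [hJ] at key
  exact sub_eq_zero.mp (Ideal.mem_bot.mp key)
end

section
/- Let B be a nontrivial Boolean ring and G an abelian group with trivial 2-torsion such that G is a torsion q-group for an odd prime q. Then the Jacobson radical of the group ring B[G] is zero. -/
/-!
Every element of `G` has odd order `k`, and `2 ^ φ(k) ≡ 1 [MOD k]`; since squaring on `B[G]` is
the additive map `∑ b_g g ↦ ∑ b_g g²`, every `x ∈ B[G]` therefore satisfies `x ^ 2 ^ M = x` for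
some `M > 0`. In a commutative ring where each `x` satisfies `x ^ n = x` with `n ≥ 2`, an element
`x` of the Jacobson radical is killed by the unit `1 - x ^ (n - 1)`, so the radical is zero.
-/

theorem Ideal.jacobson_bot_eq_bot_of_forall_exists_pow_eq_self {R : Type*} [CommRing R]
    (h : ∀ x : R, ∃ n, 2 ≤ n ∧ x ^ n = x) : (⊥ : Ideal R).jacobson = ⊥ := by
  refine eq_bot_iff.2 fun x hx => ?_
  obtain ⟨n, hn, hxn⟩ := h x
  obtain ⟨m, rfl⟩ := Nat.exists_eq_add_of_le' hn
  have hunit : IsUnit (1 - x ^ (m + 1)) := by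
    simpa [pow_succ', sub_eq_add_neg, add_comm] using mem_jacobson_bot.1 hx (-x ^ m)
  have hkill : x * (1 - x ^ (m + 1)) = 0 := by linear_combination -hxn
  exact hunit.mul_left_eq_zero.1 hkill

theorem exists_pow_pow_eq_self_of_coprime_orderOf {G : Type*} [Monoid G] {p : ℕ} (s : Finset G)
    (hfin : ∀ g ∈ s, IsOfFinOrder g) (hcop : ∀ g ∈ s, (orderOf g).Coprime p) :
    ∃ M, 0 < M ∧ ∀ g ∈ s, g ^ p ^ M = g := by
  set K := ∏ g ∈ s, orderOf g
  have hK : 0 < K := Finset.prod_pos fun g hg => (hfin g hg).orderOf_pos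
  refine ⟨K.totient, Nat.totient_pos.2 hK, fun g hg => ?_⟩
  have hpow : p ^ K.totient ≡ 1 [MOD orderOf g] :=
    (Nat.ModEq.pow_totient (Nat.Coprime.prod_left hcop).symm).of_dvd
      (Finset.dvd_prod_of_mem _ hg)
  rw [← pow_mod_orderOf, hpow, pow_mod_orderOf, pow_one]

theorem pow_pow_eq_self_of_pow_eq_self {R : Type*} [Monoid R] {p : ℕ} {r : R} (hr : r ^ p = r) :
    ∀ M : ℕ, r ^ p ^ M = r
  | 0 => pow_one r
  | M + 1 => by rw [pow_succ, pow_mul, pow_pow_eq_self_of_pow_eq_self hr M, hr]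

theorem MonoidAlgebra.pow_char_pow_eq_self {R G : Type*} [CommRing R] {p : ℕ} [ExpChar R p]
    (hR : ∀ r : R, r ^ p = r) [CommMonoid G] (x : MonoidAlgebra R G) {M : ℕ}
    (hx : ∀ g ∈ x.coeff.support, g ^ p ^ M = g) : x ^ p ^ M = x := by
  have : ExpChar (MonoidAlgebra R G) p :=
    expChar_of_injective_ringHom (f := singleOneRingHom) single_right_injective p
  conv_lhs => rw [← sum_coeff_single x]
  rw [Finsupp.sum, sum_pow_char_pow]
  conv_rhs => rw [← sum_coeff_single x]
  refine Finset.sum_congr rfl fun g hg => ?_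
  rw [single_pow, hx g hg, pow_pow_eq_self_of_pow_eq_self (hR _)]

theorem boolean_group_ring_jacobson_zero_general (B : Type*) [CommRing B] [Nontrivial B]
    (hB : ∀ x : B, x * x = x) (G : Type*) [CommGroup G]
    (q : ℕ) (hodd : Odd q)
    (hG : ∀ g : G, ∃ n : ℕ, g ^ (q ^ n) = 1) :
    Ideal.jacobson (⊥ : Ideal (MonoidAlgebra B G)) = ⊥ := by
  have : CharP B 2 :=
    CharTwo.of_one_ne_zero_of_two_eq_zero one_ne_zero (by linear_combination hB 2)
  have hodd_order (g : G) : IsOfFinOrder g ∧ (orderOf g).Coprime 2 := by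
    obtain ⟨n, hn⟩ := hG g
    exact ⟨isOfFinOrder_iff_pow_eq_one.2 ⟨q ^ n, hodd.pow.pos, hn⟩,
      Nat.coprime_two_right.2 (hodd.pow.of_dvd_nat (orderOf_dvd_of_pow_eq_one hn))⟩
  refine Ideal.jacobson_bot_eq_bot_of_forall_exists_pow_eq_self fun x => ?_
  obtain ⟨M, hM, hx⟩ := exists_pow_pow_eq_self_of_coprime_orderOf x.coeff.support
    (fun g _ => (hodd_order g).1) (fun g _ => (hodd_order g).2)
  exact ⟨2 ^ M, Nat.le_self_pow hM.ne' 2,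
    MonoidAlgebra.pow_char_pow_eq_self (fun b => (sq b).trans (hB b)) x hx⟩

theorem boolean_group_ring_jacobson_zero (B : Type*) [CommRing B] [Nontrivial B]
    (hB : ∀ x : B, x * x = x) (G : Type*) [CommGroup G]
    (h2 : ∀ g : G, g ^ 2 = 1 → g = 1) (q : ℕ) (hq : q.Prime) (hodd : Odd q)
    (hG : ∀ g : G, ∃ n : ℕ, g ^ (q ^ n) = 1) :
    Ideal.jacobson (⊥ : Ideal (MonoidAlgebra B G)) = ⊥ :=
  boolean_group_ring_jacobson_zero_general B hB G q hodd hG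
end
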